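/- arXiv:1706.09583 — 2 statements merged into one kernel-verified Lean document; each statement's English description precedes it below -/
import Mathlib

section
/- Let n ≥ 1 and let f ∈ ℚ[α_1,…,α_n][z] be a polynomial that lies in the ideal generated by the elementary symmetric polynomials σ_1, …, σ_{n−1} of α_1, …, α_n. Suppose moreover that the degree of f in z is at most n−1. Then the symmetric rational function ∑_{j=1}^n f(α_j, α) / ∏_{k ≠ j}(α_j − α_k), which is in fact a polynomial in α_1, …, α_n, vanishes at α_1 = ⋯ = α_n = 0. -/
open Polynomial Finset

/-- The leading coefficient of a Lagrange basis polynomial. -/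
lemma lagrange_basis_coeff {F : Type*} [Field F] {ι : Type*} [Fintype ι] [DecidableEq ι]
    (v : ι → F) (hv : Function.Injective v) (j : ι) :
    (Lagrange.basis Finset.univ v j).coeff (Fintype.card ι - 1)
      = (∏ k ∈ Finset.univ.erase j, (v j - v k))⁻¹ := by
  have hnat : (Lagrange.basis Finset.univ v j).natDegree = Fintype.card ι - 1 := by
    rw [Lagrange.natDegree_basis (hv.injOn) (Finset.mem_univ j)]
    simp [Finset.card_erase_of_mem, Finset.card_univ]
  rw [← hnat, Polynomial.coeff_natDegree]
  unfold Lagrange.basis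
  rw [Polynomial.leadingCoeff_prod, ← Finset.prod_inv_distrib]
  refine Finset.prod_congr rfl fun k hk => ?_
  have hne : v j ≠ v k := fun h => (Finset.ne_of_mem_erase hk) (hv h).symm
  unfold Lagrange.basisDivisor
  rw [Polynomial.leadingCoeff_mul, Polynomial.leadingCoeff_C,
    (Polynomial.monic_X_sub_C (v k)).leadingCoeff, mul_one]

/-- The divided-difference sum of a polynomial of degree < card is its top coefficient. -/
lemma sum_div_eq_coeff {F : Type*} [Field F] {ι : Type*} [Fintype ι] [DecidableEq ι]
    (v : ι → F) (hv : Function.Injective v) (g : F[X])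
    (hdeg : g.degree < (Fintype.card ι : WithBot ℕ)) :
    ∑ j : ι, g.eval (v j) / ∏ k ∈ Finset.univ.erase j, (v j - v k)
      = g.coeff (Fintype.card ι - 1) := by
  have hcard : (#(Finset.univ : Finset ι) : WithBot ℕ) = (Fintype.card ι : WithBot ℕ) := by
    simp [Finset.card_univ]
  have h := Lagrange.eq_interpolate (v := v) (s := Finset.univ) hv.injOn (by rw [hcard]; exact hdeg)
  conv_rhs => rw [h]
  rw [Lagrange.interpolate_apply, Polynomial.finset_sum_coeff]
  refine (Finset.sum_congr rfl fun j _ => ?_).symm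
  rw [Polynomial.coeff_C_mul, lagrange_basis_coeff v hv j, div_eq_mul_inv]

/-- Let `f ∈ ℚ[α₁,…,αₙ][z]` have all coefficients in the ideal generated by the elementary
symmetric polynomials `σ₁,…,σ_{n-1}` and `z`-degree at most `n - 1`.  Then the symmetric
rational function `∑ j, f(α_j, α) / ∏_{k ≠ j} (α_j - α_k)` is a polynomial in `α₁,…,αₙ`
which vanishes at `α = 0`. -/
theorem stmt5 {n : ℕ} (hn : 1 ≤ n)
    (f : Polynomial (MvPolynomial (Fin n) ℚ))
    (hfI : ∀ i : ℕ, f.coeff i ∈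
      Ideal.span ((fun p => MvPolynomial.esymm (Fin n) ℚ p) '' (Set.Icc 1 (n - 1))))
    (hfdeg : f.degree < (n : WithBot ℕ)) :
    ∃ P : MvPolynomial (Fin n) ℚ,
      (∀ α : Fin n → ℚ, Function.Injective α →
        ∑ j : Fin n,
          (f.map (MvPolynomial.eval α)).eval (α j) /
            ∏ k ∈ Finset.univ.erase j, (α j - α k)
          = MvPolynomial.eval α P) ∧
      MvPolynomial.eval (0 : Fin n → ℚ) P = 0 := by
  refine ⟨f.coeff (n - 1), fun α hα => ?_, ?_⟩
  · have hdeg : (f.map (MvPolynomial.eval α)).degree < (Fintype.card (Fin n) : WithBot ℕ) := by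
      rw [Fintype.card_fin]
      exact lt_of_le_of_lt (Polynomial.degree_map_le) hfdeg
    rw [sum_div_eq_coeff α hα _ hdeg, Fintype.card_fin, Polynomial.coeff_map]
  · have h := hfI (n - 1)
    have : MvPolynomial.eval (0 : Fin n → ℚ) (f.coeff (n - 1)) ∈
        Ideal.map (MvPolynomial.eval (0 : Fin n → ℚ))
          (Ideal.span ((fun p => MvPolynomial.esymm (Fin n) ℚ p) '' (Set.Icc 1 (n - 1)))) :=
      Ideal.mem_map_of_mem _ h
    rw [Ideal.map_span] at this
    have hz : (MvPolynomial.eval (0 : Fin n → ℚ)) ''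
        ((fun p => MvPolynomial.esymm (Fin n) ℚ p) '' (Set.Icc 1 (n - 1))) ⊆ {0} := by
      rintro x ⟨y, ⟨p, hp, rfl⟩, rfl⟩
      simp only [Set.mem_singleton_iff]
      rw [MvPolynomial.esymm, map_sum]
      refine Finset.sum_eq_zero fun t ht => ?_
      rw [map_prod]
      have : t.Nonempty := by
        rw [← Finset.card_pos, (Finset.mem_powersetCard.mp ht).2]
        exact hp.1
      obtain ⟨i, hi⟩ := this
      exact Finset.prod_eq_zero hi (by simp)
    have := Ideal.span_mono hz this
    rwa [Ideal.span_singleton_eq_bot.mpr rfl, Ideal.mem_bot] at this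
end

section
/- Let K be a field and let f = p/r be a rational function over K where r splits into distinct linear factors, r(z) = ∏_{j=1}^n (z − α_j) with the α_j pairwise distinct, and deg p ≤ n − 2. Then the sum of residues of f over all its (simple) poles vanishes: ∑_{j=1}^n p(α_j)/∏_{k ≠ j}(α_j − α_k) = 0. -/
open Polynomial Finset

lemma basis_coeff {K : Type*} [Field K] {n : ℕ} (α : Fin n → K) (hα : Function.Injective α)
    (j : Fin n) :
    (Lagrange.basis Finset.univ α j).coeff (n - 1) =
      (∏ k ∈ Finset.univ.erase j, (α j - α k))⁻¹ := by
  have hinj : Set.InjOn α (Finset.univ : Finset (Fin n)) := hα.injOn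
  have hdeg := Lagrange.natDegree_basis hinj (Finset.mem_univ j)
  rw [Finset.card_univ, Fintype.card_fin] at hdeg
  rw [← hdeg, Polynomial.coeff_natDegree, Lagrange.basis, Polynomial.leadingCoeff_prod,
    ← Finset.prod_inv_distrib]
  refine Finset.prod_congr rfl fun k hk => ?_
  have hne : α j - α k ≠ 0 := sub_ne_zero_of_ne (fun h => (Finset.mem_erase.mp hk).1.symm (hα h))
  rw [Lagrange.basisDivisor, leadingCoeff_mul, leadingCoeff_C, leadingCoeff_X_sub_C, mul_one]

/-- Residue theorem on `S²` for a rational function with simple poles: if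
`r(z) = ∏ (z - α_j)` with the `α_j` pairwise distinct and `deg p ≤ n - 2`, then the sum of
the residues of `p/r` vanishes: `∑ j, p(α_j) / ∏_{k ≠ j} (α_j - α_k) = 0`. -/
theorem stmt9 {K : Type*} [Field K] {n : ℕ}
    (α : Fin n → K) (hα : Function.Injective α) (p : Polynomial K)
    (hp : p.degree < ((n - 1 : ℕ) : WithBot ℕ)) :
    ∑ j : Fin n, p.eval (α j) / ∏ k ∈ Finset.univ.erase j, (α j - α k) = 0 := by
  rcases Nat.eq_zero_or_pos n with rfl | hn
  · simp
  have hinj : Set.InjOn α (Finset.univ : Finset (Fin n)) := hα.injOn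
  have hcard : (#(Finset.univ : Finset (Fin n)) : WithBot ℕ) = (n : WithBot ℕ) := by
    rw [Finset.card_univ, Fintype.card_fin]
  have hlt : p.degree < #(Finset.univ : Finset (Fin n)) := by
    rw [hcard]
    exact hp.trans_le (by exact_mod_cast Nat.cast_le.mpr (Nat.sub_le n 1))
  have hinterp := Lagrange.eq_interpolate hinj hlt
  have hzero : p.coeff (n - 1) = 0 := coeff_eq_zero_of_degree_lt hp
  rw [hinterp, Lagrange.interpolate_apply, Polynomial.finset_sum_coeff] at hzero
  simp only [Polynomial.coeff_C_mul, basis_coeff α hα] at hzero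
  rw [← hzero]
  exact Finset.sum_congr rfl fun j _ => (div_eq_mul_inv _ _)
end
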